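/- arXiv:math/0412254 — 2 statements merged into one kernel-verified Lean document; each statement's English description precedes it below -/
import Mathlib

section
/- Let (X, μ) be a standard Borel space with an atomless Borel probability measure μ and let Φ be a finite family of partial isomorphisms of (X, μ). Suppose there exist δ > 0 and, for every n ∈ ℕ, Borel sets A_n, B_n ⊆ X with μ(A_n) ≥ δ, μ(B_n) ≥ δ and d_Φ(A_n, B_n) ≥ n + 1. Then there exists a nontrivial asymptotically invariant sequence of Borel subsets of X for Φ. -/
open MeasureTheory Filter Set
open scoped ENNReal

/-- A partial isomorphism of a standard Borel space `X`: a Borel bijection between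
two Borel subsets `dom` and `ran` of `X`, with Borel inverse. -/
structure PartialIso (X : Type*) [MeasurableSpace X] where
  dom : Set X
  ran : Set X
  toFun : X → X
  invFun : X → X
  measurableSet_dom : MeasurableSet dom
  measurableSet_ran : MeasurableSet ran
  measurable_toFun : Measurable toFun
  measurable_invFun : Measurable invFun
  mapsTo : Set.MapsTo toFun dom ran
  mapsTo_inv : Set.MapsTo invFun ran dom
  left_inv : ∀ x ∈ dom, invFun (toFun x) = x
  right_inv : ∀ y ∈ ran, toFun (invFun y) = y

namespace PartialIso

variable {X : Type*} [MeasurableSpace X]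

/-- The identity as a partial isomorphism. -/
def refl (X : Type*) [MeasurableSpace X] : PartialIso X :=
  ⟨Set.univ, Set.univ, id, id, MeasurableSet.univ, MeasurableSet.univ,
   measurable_id, measurable_id, Set.mapsTo_univ _ _, Set.mapsTo_univ _ _,
   fun _ _ => rfl, fun _ _ => rfl⟩

/-- The inverse of a partial isomorphism. -/
def symm (f : PartialIso X) : PartialIso X :=
  ⟨f.ran, f.dom, f.invFun, f.toFun, f.measurableSet_ran, f.measurableSet_dom,
   f.measurable_invFun, f.measurable_toFun, f.mapsTo_inv, f.mapsTo,
   f.right_inv, f.left_inv⟩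

/-- Composition (first `f`, then `g`) of partial isomorphisms, on its natural domain. -/
def trans (f g : PartialIso X) : PartialIso X where
  dom := f.dom ∩ f.toFun ⁻¹' g.dom
  ran := g.ran ∩ g.invFun ⁻¹' f.ran
  toFun := g.toFun ∘ f.toFun
  invFun := f.invFun ∘ g.invFun
  measurableSet_dom := f.measurableSet_dom.inter (f.measurable_toFun g.measurableSet_dom)
  measurableSet_ran := g.measurableSet_ran.inter (g.measurable_invFun f.measurableSet_ran)
  measurable_toFun := g.measurable_toFun.comp f.measurable_toFun
  measurable_invFun := f.measurable_invFun.comp g.measurable_invFun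
  mapsTo := by
    rintro x ⟨hx1, hx2⟩
    refine ⟨g.mapsTo hx2, ?_⟩
    show g.invFun (g.toFun (f.toFun x)) ∈ f.ran
    rw [g.left_inv _ hx2]
    exact f.mapsTo hx1
  mapsTo_inv := by
    rintro y ⟨hy1, hy2⟩
    refine ⟨f.mapsTo_inv hy2, ?_⟩
    show f.toFun (f.invFun (g.invFun y)) ∈ g.dom
    rw [f.right_inv _ hy2]
    exact g.mapsTo_inv hy1
  left_inv := by
    rintro x ⟨hx1, hx2⟩
    show f.invFun (g.invFun (g.toFun (f.toFun x))) = x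
    rw [g.left_inv _ hx2, f.left_inv _ hx1]
  right_inv := by
    rintro y ⟨hy1, hy2⟩
    show g.toFun (f.toFun (f.invFun (g.invFun y))) = y
    rw [f.right_inv _ hy2, g.right_inv _ hy1]

/-- A partial isomorphism is nonsingular for `μ` (is a partial isomorphism of `(X, μ)`)
if it maps null sets inside its domain exactly to null sets. -/
def Nonsingular (μ : Measure X) (f : PartialIso X) : Prop :=
  ∀ A ⊆ f.dom, MeasurableSet A → (μ A = 0 ↔ μ (f.toFun '' A) = 0)

/-- The graph of the partial isomorphism `f` is contained in the relation `R`. -/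
def IsInnerOf (f : PartialIso X) (R : Set (X × X)) : Prop :=
  ∀ x ∈ f.dom, (x, f.toFun x) ∈ R

end PartialIso

variable {X : Type*} [MeasurableSpace X]

/-- `IsWord Φ m k` : `m` is a `Φ`-word of length `k`, i.e. a composition of `k` elements
of `Φ` and their inverses (on its natural domain). -/
def IsWord (Φ : Set (PartialIso X)) (m : PartialIso X) (k : ℕ) : Prop :=
  ∃ l : List (PartialIso X), l.length = k ∧
    (∀ φ ∈ l, φ ∈ Φ ∨ ∃ ψ ∈ Φ, φ = ψ.symm) ∧
    m = l.foldl PartialIso.trans (PartialIso.refl X)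

/-- `wordDistLE Φ μ A B r` : the essential distance `d_Φ(A, B)` is at most `r`, i.e. the
set of points of `A` sent into `B` by some `Φ`-word of length at most `r` has positive
measure. -/
def wordDistLE (Φ : Set (PartialIso X)) (μ : Measure X) (A B : Set X) (r : ℕ) : Prop :=
  0 < μ {x ∈ A | ∃ m k, IsWord Φ m k ∧ k ≤ r ∧ x ∈ m.dom ∧ m.toFun x ∈ B}

/-- The metric-measure space `(X, d_Φ, μ)` is concentrated. -/
def Concentrated (Φ : Set (PartialIso X)) (μ : Measure X) : Prop :=
  ∀ δ : ℝ≥0∞, 0 < δ → ∃ r : ℕ, ∀ A B : Set X, MeasurableSet A → MeasurableSet B →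
    δ ≤ μ A → δ ≤ μ B → wordDistLE Φ μ A B r

/-- The metric `d_Φ` is ergodic relative to `μ` : any two sets of positive measure are at
finite essential distance. -/
def MetricErgodic (Φ : Set (PartialIso X)) (μ : Measure X) : Prop :=
  ∀ A B : Set X, MeasurableSet A → MeasurableSet B → 0 < μ A → 0 < μ B →
    ∃ r : ℕ, wordDistLE Φ μ A B r

/-- A sequence of Borel sets is asymptotically invariant for the family `Φ`. -/
def AsympInvariant (Φ : Set (PartialIso X)) (μ : Measure X) (A : ℕ → Set X) : Prop :=
  ∀ m k, IsWord Φ m k →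
    Tendsto (fun n => μ (m.toFun '' (A n ∩ m.dom) \ A n)) atTop (nhds 0)

/-- A sequence of Borel sets is nontrivial: measures uniformly bounded away from `0` and `1`. -/
def NontrivialSeq (μ : Measure X) (A : ℕ → Set X) : Prop :=
  ∃ δ : ℝ≥0∞, 0 < δ ∧ ∀ n, δ ≤ μ (A n) ∧ μ (A n) ≤ 1 - δ

/-- A countable Borel equivalence relation on `X`. -/
def IsCountableBorelER (R : Set (X × X)) : Prop :=
  MeasurableSet R ∧ Equivalence (fun x y => (x, y) ∈ R) ∧ ∀ x, {y | (x, y) ∈ R}.Countable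

/-- `μ` is quasi-invariant for `R` : partial isomorphisms of `R` map null sets to null sets. -/
def QuasiInvariant (μ : Measure X) (R : Set (X × X)) : Prop :=
  ∀ f : PartialIso X, f.IsInnerOf R → ∀ N ⊆ f.dom, MeasurableSet N → μ N = 0 →
    μ (f.toFun '' N) = 0

/-- `μ` is invariant for `R` : partial isomorphisms of `R` preserve the measure. -/
def InvariantMeasure (μ : Measure X) (R : Set (X × X)) : Prop :=
  ∀ f : PartialIso X, f.IsInnerOf R → ∀ A ⊆ f.dom, MeasurableSet A →
    μ (f.toFun '' A) = μ A

/-- `R` is ergodic for `μ` : every Borel saturated set is null or conull. -/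
def ErgodicRel (μ : Measure X) (R : Set (X × X)) : Prop :=
  ∀ A : Set X, MeasurableSet A → (∀ x ∈ A, ∀ y, (x, y) ∈ R → y ∈ A) →
    μ A = 0 ∨ μ Aᶜ = 0

/-- `Φ` is a graphing of `R` : a family of partial isomorphisms of `R` whose words connect
almost every pair of equivalent points. -/
def IsGraphing (Φ : Set (PartialIso X)) (μ : Measure X) (R : Set (X × X)) : Prop :=
  (∀ φ ∈ Φ, φ.IsInnerOf R) ∧
  ∀ᵐ x ∂μ, ∀ y, (x, y) ∈ R → ∃ m k, IsWord Φ m k ∧ x ∈ m.dom ∧ m.toFun x = y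

/-- A sequence of Borel sets is asymptotically invariant for the relation `R`. -/
def AsympInvariantRel (μ : Measure X) (R : Set (X × X)) (A : ℕ → Set X) : Prop :=
  ∀ f : PartialIso X, f.IsInnerOf R →
    Tendsto (fun n => μ (f.toFun '' (A n ∩ f.dom) \ A n)) atTop (nhds 0)

/-- `R` is strongly ergodic : every asymptotically invariant sequence is trivial. -/
def StronglyErgodic (μ : Measure X) (R : Set (X × X)) : Prop :=
  ¬ ∃ A : ℕ → Set X, (∀ n, MeasurableSet (A n)) ∧ AsympInvariantRel μ R A ∧
    NontrivialSeq μ A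

/-- The boundary `∂_Φ A` of a set `A` with respect to the family `Φ`. -/
def bdry (Φ : Set (PartialIso X)) (A : Set X) : Set X :=
  (⋃ φ ∈ Φ, φ.toFun '' (A ∩ φ.dom) ∪ φ.invFun '' (A ∩ φ.ran)) \ A

/-- A vanishing Følner sequence for the family `Φ`. -/
def VanishingFolner (Φ : Set (PartialIso X)) (μ : Measure X) (A : ℕ → Set X) : Prop :=
  (∀ n, MeasurableSet (A n)) ∧ (∀ n, 0 < μ (A n)) ∧
  Tendsto (fun n => μ (A n)) atTop (nhds 0) ∧
  Tendsto (fun n => μ (bdry Φ (A n)) / μ (A n)) atTop (nhds 0)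

/-- The equivalence relation generated by the family `Φ` : `(x, y) ∈ RGen Φ` iff `y = m x`
for some `Φ`-word `m`. -/
def RGen (Φ : Set (PartialIso X)) : Set (X × X) :=
  {p | ∃ m k, IsWord Φ m k ∧ p.1 ∈ m.dom ∧ m.toFun p.1 = p.2}

/-!
Thicken `B n` along `Φ`-words: the word-neighbourhoods `N_k(B n)` increase with `k`, have measure
at least `δ`, and for `k ≤ n` stay essentially disjoint from `A n`, so have measure at most `1 - δ`.
A word of length `L` moves `N_k` into `N_{k+L}`, so `N_k(B n)` is almost invariant as soon as
the shell `N_{k+r} \ N_k` is small for some `r ≥ L`. Among the `r` disjoint shells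
`N_{(j+1)r} \ N_{jr}`, `j < r`, one has measure at most `1/r`; taking `r = ⌊√(n+1)⌋` keeps the
radius `jr` below `n` while `r → ∞`.
-/

open Topology

namespace PartialIso

theorem ext' {f g : PartialIso X} (h1 : f.dom = g.dom) (h2 : f.ran = g.ran)
    (h3 : f.toFun = g.toFun) (h4 : f.invFun = g.invFun) : f = g := by
  cases f; cases g; dsimp at h1 h2 h3 h4; subst h1 h2 h3 h4; rfl

theorem trans_assoc (f g h : PartialIso X) : (f.trans g).trans h = f.trans (g.trans h) :=
  ext' (by simp [trans, preimage_comp, inter_assoc]) (by simp [trans, preimage_comp, inter_assoc])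
    rfl rfl

theorem refl_trans (f : PartialIso X) : (refl X).trans f = f := by
  apply ext' <;> simp [trans, refl]

theorem trans_refl (f : PartialIso X) : f.trans (refl X) = f := by
  apply ext' <;> simp [trans, refl]

theorem symm_trans (f g : PartialIso X) : (f.trans g).symm = g.symm.trans f.symm := rfl

theorem foldl_trans_eq (l : List (PartialIso X)) (e : PartialIso X) :
    l.foldl trans e = e.trans (l.foldl trans (refl X)) := by
  induction l generalizing e with
  | nil => simp [trans_refl]
  | cons a t ih =>
    simp only [List.foldl_cons]
    rw [ih (e.trans a), ih ((refl X).trans a), refl_trans, trans_assoc]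

theorem symm_foldl (l : List (PartialIso X)) :
    (l.foldl trans (refl X)).symm = (l.reverse.map symm).foldl trans (refl X) := by
  induction l with
  | nil => rfl
  | cons a t ih =>
    rw [List.foldl_cons, foldl_trans_eq, refl_trans, symm_trans, ih,
      List.reverse_cons, List.map_append, List.foldl_append]
    simp

end PartialIso

section Words

variable {Φ : Set (PartialIso X)}

theorem isWord_refl (Φ : Set (PartialIso X)) : IsWord Φ (PartialIso.refl X) 0 :=
  ⟨[], rfl, by simp, rfl⟩

theorem IsWord.symm {m : PartialIso X} {k : ℕ} (h : IsWord Φ m k) : IsWord Φ m.symm k := by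
  obtain ⟨l, rfl, hl, rfl⟩ := h
  refine ⟨l.reverse.map PartialIso.symm, by simp, ?_, PartialIso.symm_foldl l⟩
  simp only [List.mem_map, List.mem_reverse]
  rintro _ ⟨ψ, hψ, rfl⟩
  rcases hl ψ hψ with hψΦ | ⟨χ, hχ, rfl⟩
  · exact Or.inr ⟨ψ, hψΦ, rfl⟩
  · exact Or.inl hχ

theorem IsWord.trans {m m' : PartialIso X} {k k' : ℕ} (h : IsWord Φ m k)
    (h' : IsWord Φ m' k') : IsWord Φ (m.trans m') (k + k') := by
  obtain ⟨l, rfl, hl, rfl⟩ := h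
  obtain ⟨l', rfl, hl', rfl⟩ := h'
  refine ⟨l ++ l', List.length_append, fun φ hφ => ?_, ?_⟩
  · rcases List.mem_append.mp hφ with hφ | hφ
    exacts [hl φ hφ, hl' φ hφ]
  · rw [List.foldl_append, PartialIso.foldl_trans_eq l' (l.foldl _ _)]

theorem countable_setOf_isWord (hΦ : Φ.Countable) : {m | ∃ k, IsWord Φ m k}.Countable := by
  have : Countable ↥(Φ ∪ PartialIso.symm '' Φ) := (hΦ.union (hΦ.image _)).to_subtype
  refine (countable_range fun l : List ↥(Φ ∪ PartialIso.symm '' Φ) =>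
    (l.map (↑)).foldl PartialIso.trans (PartialIso.refl X)).mono ?_
  rintro _ ⟨k, l, -, hl, rfl⟩
  lift l to List ↥(Φ ∪ PartialIso.symm '' Φ) using
    fun φ hφ => (hl φ hφ).imp id fun ⟨ψ, hψ, h⟩ => ⟨ψ, hψ, h.symm⟩
  exact ⟨l, rfl⟩

def wordNbhd (Φ : Set (PartialIso X)) (B : Set X) (r : ℕ) : Set X :=
  {x | ∃ m k, IsWord Φ m k ∧ k ≤ r ∧ x ∈ m.dom ∧ m.toFun x ∈ B}

theorem not_wordDistLE_iff {μ : Measure X} {A B : Set X} {r : ℕ} :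
    ¬ wordDistLE Φ μ A B r ↔ μ (A ∩ wordNbhd Φ B r) = 0 :=
  not_lt.trans nonpos_iff_eq_zero

theorem wordNbhd_mono {B : Set X} : Monotone (wordNbhd Φ B) := by
  rintro r r' hr x ⟨m, k, hm, hk, hx⟩
  exact ⟨m, k, hm, hk.trans hr, hx⟩

theorem subset_wordNbhd {B : Set X} {r : ℕ} : B ⊆ wordNbhd Φ B r :=
  fun x hx => ⟨PartialIso.refl X, 0, isWord_refl Φ, r.zero_le, mem_univ x, hx⟩

theorem measurableSet_wordNbhd (hΦ : Φ.Countable) {B : Set X} (hB : MeasurableSet B) (r : ℕ) :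
    MeasurableSet (wordNbhd Φ B r) := by
  have hN : wordNbhd Φ B r = ⋃ m ∈ {m | ∃ k, IsWord Φ m k ∧ k ≤ r}, m.dom ∩ m.toFun ⁻¹' B := by
    ext x
    simp only [wordNbhd, mem_ofPred_eq, mem_iUnion, mem_inter_iff, mem_preimage, exists_prop]
    exact ⟨fun ⟨m, k, hm, hk, hx⟩ => ⟨m, ⟨k, hm, hk⟩, hx⟩,
      fun ⟨m, ⟨k, hm, hk⟩, hx⟩ => ⟨m, k, hm, hk, hx⟩⟩
  rw [hN]
  have hW : {m | ∃ k, IsWord Φ m k ∧ k ≤ r}.Countable :=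
    (countable_setOf_isWord hΦ).mono (by rintro m ⟨k, hm, -⟩; exact ⟨k, hm⟩)
  exact .biUnion hW fun m _ => m.measurableSet_dom.inter (m.measurable_toFun hB)

theorem image_wordNbhd_subset {B : Set X} {r L : ℕ} {m : PartialIso X} (hm : IsWord Φ m L) :
    m.toFun '' (wordNbhd Φ B r ∩ m.dom) ⊆ wordNbhd Φ B (r + L) := by
  rintro _ ⟨x, ⟨⟨w, k, hw, hk, hxw, hwB⟩, hxm⟩, rfl⟩
  have hx : m.invFun (m.toFun x) = x := m.left_inv x hxm
  refine ⟨m.symm.trans w, L + k, hm.symm.trans hw, by omega, ⟨m.mapsTo hxm, ?_⟩, ?_⟩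
  · show m.invFun (m.toFun x) ∈ w.dom
    rwa [hx]
  · show w.toFun (m.invFun (m.toFun x)) ∈ B
    rwa [hx]

theorem asympInvariant_wordNbhd (μ : Measure X) {B : ℕ → Set X} {k r : ℕ → ℕ}
    (hr : Tendsto r atTop atTop)
    (hshell : Tendsto (fun n => μ (wordNbhd Φ (B n) (k n + r n) \ wordNbhd Φ (B n) (k n)))
      atTop (𝓝 0)) :
    AsympInvariant Φ μ fun n => wordNbhd Φ (B n) (k n) := by
  intro m L hm
  refine tendsto_of_tendsto_of_tendsto_of_le_of_le' tendsto_const_nhds hshell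
    (Eventually.of_forall fun _ => zero_le) ?_
  filter_upwards [hr.eventually_ge_atTop L] with n hn
  exact measure_mono <| sdiff_subset_sdiff_left <|
    (image_wordNbhd_subset hm).trans (wordNbhd_mono (Nat.add_le_add_left hn _))

end Words

theorem exists_measure_sdiff_le_div (μ : Measure X) {S : ℕ → Set X} (hS : Monotone S)
    (hSm : ∀ k, MeasurableSet (S k)) {r : ℕ} (hr : r ≠ 0) :
    ∃ k, k + r ≤ r * r ∧ μ (S (k + r) \ S k) ≤ μ univ / r := by
  set T : ℕ → Set X := fun j => S (j * r)
  have hT : Monotone T := fun i j h => hS (Nat.mul_le_mul_right r h)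
  have hsum : ∑ j ∈ Finset.range r, μ (disjointed T (j + 1)) ≤
      ∑ _j ∈ Finset.range r, μ univ / r := by
    rw [Finset.sum_const, Finset.card_range, nsmul_eq_mul,
      ENNReal.mul_div_cancel (Nat.cast_ne_zero.mpr hr) (ENNReal.natCast_ne_top r)]
    exact sum_measure_le_measure_univ
      (fun j _ => (MeasurableSet.disjointed (fun i => hSm (i * r)) _).nullMeasurableSet)
      fun i _ j _ hij => (disjoint_disjointed T (by omega : i + 1 ≠ j + 1)).aedisjoint
  obtain ⟨j, hj, hle⟩ := ENNReal.exists_le_of_sum_le (Finset.nonempty_range_iff.mpr hr) hsum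
  refine ⟨j * r, ?_, ?_⟩
  · rw [← add_one_mul]
    exact Nat.mul_le_mul_right r (Finset.mem_range.mp hj)
  · rwa [hT.disjointed_add_one, show T (j + 1) = S (j * r + r) by simp [T, add_one_mul]] at hle

theorem measure_le_one_sub_of_inter_null (μ : Measure X) [IsProbabilityMeasure μ]
    {s t : Set X} (hs : MeasurableSet s) (hts : μ (t ∩ s) = 0) : μ s ≤ 1 - μ t := by
  have ht : μ t ≤ 1 - μ s := calc
    μ t ≤ μ (t ∩ s) + μ (t \ s) := measure_le_inter_add_sdiff μ t s
    _ = μ (t \ s) := by rw [hts, zero_add]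
    _ ≤ μ sᶜ := measure_mono (sdiff_subset_compl t s)
    _ = 1 - μ s := prob_compl_eq_one_sub hs
  calc μ s = 1 - (1 - μ s) := (ENNReal.sub_sub_cancel ENNReal.one_ne_top prob_le_one).symm
    _ ≤ 1 - μ t := tsub_le_tsub_left ht 1

theorem stmt2_general {X : Type*} [MeasurableSpace X]
    (μ : Measure X) [IsProbabilityMeasure μ]
    (Φ : Set (PartialIso X)) (hfin : Φ.Finite)
    (δ : ℝ≥0∞) (hδ : 0 < δ)
    (A B : ℕ → Set X) (hB : ∀ n, MeasurableSet (B n))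
    (hAδ : ∀ n, δ ≤ μ (A n)) (hBδ : ∀ n, δ ≤ μ (B n))
    (hfar : ∀ n : ℕ, ¬ wordDistLE Φ μ (A n) (B n) n) :
    ∃ C : ℕ → Set X, (∀ n, MeasurableSet (C n)) ∧
      AsympInvariant Φ μ C ∧ NontrivialSeq μ C := by
  have hN : ∀ n k, MeasurableSet (wordNbhd Φ (B n) k) :=
    fun n => measurableSet_wordNbhd hfin.countable (hB n)
  set r : ℕ → ℕ := fun n => Nat.sqrt (n + 1)
  have hr0 : ∀ n, r n ≠ 0 := fun n => (Nat.sqrt_pos.mpr n.succ_pos).ne'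
  have hr : Tendsto r atTop atTop :=
    tendsto_atTop_atTop.mpr fun b => ⟨b * b, fun n hn => Nat.le_sqrt.mpr (by omega)⟩
  choose k hkr hshell using fun n => exists_measure_sdiff_le_div μ wordNbhd_mono (hN n) (hr0 n)
  have hkn : ∀ n, k n ≤ n := fun n => by
    have : r n * r n ≤ n + 1 := Nat.sqrt_le _
    have := hkr n
    have := hr0 n
    omega
  refine ⟨fun n => wordNbhd Φ (B n) (k n), fun n => hN n _, asympInvariant_wordNbhd μ hr ?_,
    δ, hδ, fun n => ⟨(hBδ n).trans (measure_mono subset_wordNbhd), ?_⟩⟩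
  · refine tendsto_of_tendsto_of_tendsto_of_le_of_le tendsto_const_nhds
      (ENNReal.tendsto_inv_nat_nhds_zero.comp hr) (fun _ => zero_le) fun n => ?_
    simpa using hshell n
  · calc μ (wordNbhd Φ (B n) (k n))
        ≤ μ (wordNbhd Φ (B n) n) := measure_mono (wordNbhd_mono (hkn n))
      _ ≤ 1 - μ (A n) :=
        measure_le_one_sub_of_inter_null μ (hN n n) (not_wordDistLE_iff.mp (hfar n))
      _ ≤ 1 - δ := tsub_le_tsub_left (hAδ n) 1

/-- If there are sets `A_n, B_n` of measure at least `δ > 0` with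
`d_Φ(A_n, B_n) ≥ n + 1`, then there is a nontrivial asymptotically invariant sequence
for `Φ`. -/
theorem stmt2 {X : Type*} [MeasurableSpace X] [StandardBorelSpace X]
    (μ : Measure X) [IsProbabilityMeasure μ] [NullSingletonClass μ]
    (Φ : Set (PartialIso X)) (hfin : Φ.Finite)
    (hns : ∀ φ ∈ Φ, φ.Nonsingular μ)
    (δ : ℝ≥0∞) (hδ : 0 < δ)
    (A B : ℕ → Set X) (hA : ∀ n, MeasurableSet (A n)) (hB : ∀ n, MeasurableSet (B n))
    (hAδ : ∀ n, δ ≤ μ (A n)) (hBδ : ∀ n, δ ≤ μ (B n))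
    (hfar : ∀ n : ℕ, ¬ wordDistLE Φ μ (A n) (B n) n) :
    ∃ C : ℕ → Set X, (∀ n, MeasurableSet (C n)) ∧
      AsympInvariant Φ μ C ∧ NontrivialSeq μ C :=
  stmt2_general μ Φ hfin δ hδ A B hB hAδ hBδ hfar
end

section
/- Let R be an ergodic countable Borel equivalence relation on a standard Borel space X with an atomless quasi-invariant Borel probability measure μ, and let Φ and Ψ be two finite graphings of R. Then the metric-measure space (X, d_Φ, μ) is concentrated if and only if (X, d_Ψ, μ) is concentrated. (Concentration of a uniformly locally finite quasi-periodic graph over an ergodic singular space of finite type does not depend on the chosen graph.) -/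
open MeasureTheory Filter Set
open scoped ENNReal

variable {X : Type*} [MeasurableSpace X]

/-! Concentration along `Φ` transfers to `Ψ`: a concentration radius `r` for `Φ` involves
only the finitely many `Φ`-words of length at most `r`. Each of them maps a point into its
`R`-class, where almost every point is reached by some `Ψ`-word, so outside a set of small
measure all of them agree with `Ψ`-words of length at most some `K`, and `K` is a
concentration radius for `Ψ`. -/

namespace PartialIso

variable {R : Set (X × X)}

theorem IsInnerOf.symm (hR : ∀ {x y}, (x, y) ∈ R → (y, x) ∈ R) {f : PartialIso X}
    (hf : f.IsInnerOf R) : f.symm.IsInnerOf R := fun y hy => by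
  have h := hf _ (f.mapsTo_inv hy)
  rw [f.right_inv y hy] at h
  exact hR h

theorem IsInnerOf.trans (hR : ∀ {x y z}, (x, y) ∈ R → (y, z) ∈ R → (x, z) ∈ R)
    {f g : PartialIso X} (hf : f.IsInnerOf R) (hg : g.IsInnerOf R) :
    (f.trans g).IsInnerOf R := fun x hx => hR (hf x hx.1) (hg _ hx.2)

end PartialIso

theorem IsWord.isInnerOf {R : Set (X × X)} (hR : Equivalence fun x y => (x, y) ∈ R)
    {Φ : Set (PartialIso X)} (hΦ : ∀ φ ∈ Φ, φ.IsInnerOf R) {m : PartialIso X} {k : ℕ}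
    (hm : IsWord Φ m k) : m.IsInnerOf R := by
  obtain ⟨l, -, hl, rfl⟩ := hm
  suffices ∀ f : PartialIso X, f.IsInnerOf R → (l.foldl PartialIso.trans f).IsInnerOf R from
    this _ fun x _ => hR.refl x
  induction l with
  | nil => exact fun f hf => hf
  | cons φ l ih =>
    intro f hf
    have hφ : φ.IsInnerOf R := by
      rcases hl φ List.mem_cons_self with hφ | ⟨ψ, hψ, rfl⟩
      exacts [hΦ φ hφ, (hΦ ψ hψ).symm hR.symm]
    exact ih (fun φ' h => hl φ' (List.mem_cons_of_mem _ h)) _ (hf.trans hR.trans hφ)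

theorem finite_setOf_isWord_le {Φ : Set (PartialIso X)} (hΦ : Φ.Finite) (r : ℕ) :
    {m : PartialIso X | ∃ k ≤ r, IsWord Φ m k}.Finite := by
  set letters : Set (PartialIso X) := Φ ∪ PartialIso.symm '' Φ
  have : Finite letters := (hΦ.union (hΦ.image _)).to_subtype
  refine ((List.finite_length_le letters r).image
    fun l => (l.map Subtype.val).foldl PartialIso.trans (PartialIso.refl X)).subset ?_
  rintro m ⟨k, hk, l, rfl, hl, rfl⟩
  have hl' : ∀ φ ∈ l, φ ∈ letters := fun φ hφ => by
    rcases hl φ hφ with h | ⟨ψ, hψ, rfl⟩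
    exacts [Or.inl h, Or.inr ⟨ψ, hψ, rfl⟩]
  lift l to List letters using hl'
  exact ⟨l, by simpa using hk, rfl⟩

theorem measurableSet_setOf_isWord_eq [MeasurableEq X] {Ψ : Set (PartialIso X)}
    (hΨ : Ψ.Finite) (K : ℕ) {g : X → X} (hg : Measurable g) :
    MeasurableSet {x | ∃ m k, IsWord Ψ m k ∧ k ≤ K ∧ x ∈ m.dom ∧ m.toFun x = g x} := by
  have h : {x | ∃ m k, IsWord Ψ m k ∧ k ≤ K ∧ x ∈ m.dom ∧ m.toFun x = g x} =
      ⋃ m ∈ {m : PartialIso X | ∃ k ≤ K, IsWord Ψ m k}, m.dom ∩ {x | m.toFun x = g x} := by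
    ext x
    simp only [mem_ofPred_eq, mem_iUnion, mem_inter_iff, exists_prop]
    exact ⟨fun ⟨m, k, hm, hk, hx⟩ => ⟨m, ⟨k, hk, hm⟩, hx⟩,
      fun ⟨m, ⟨k, hk, hm⟩, hx⟩ => ⟨m, k, hm, hk, hx⟩⟩
  rw [h]
  exact (finite_setOf_isWord_le hΨ K).measurableSet_biUnion fun m _ =>
    m.measurableSet_dom.inter (measurableSet_eq_fun m.measurable_toFun hg)

theorem exists_isWord_eq_of_notMem_of_measure_lt [MeasurableEq X] {μ : Measure X}
    [IsFiniteMeasure μ] {R : Set (X × X)} {Ψ W : Set (PartialIso X)} (hΨfin : Ψ.Finite)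
    (hΨ : IsGraphing Ψ μ R) (hW : W.Finite) (hWR : ∀ f ∈ W, f.IsInnerOf R) {ε : ℝ≥0∞}
    (hε : 0 < ε) :
    ∃ N, MeasurableSet N ∧ μ N < ε ∧ ∃ K, ∀ f ∈ W, ∀ x ∈ f.dom, x ∉ N →
      ∃ m k, IsWord Ψ m k ∧ k ≤ K ∧ x ∈ m.dom ∧ m.toFun x = f.toFun x := by
  set good : PartialIso X → ℕ → Set X := fun f K =>
    {x | ∃ m k, IsWord Ψ m k ∧ k ≤ K ∧ x ∈ m.dom ∧ m.toFun x = f.toFun x}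
  set bad : ℕ → Set X := fun K => ⋃ f ∈ W, f.dom \ good f K
  have hbad_meas : ∀ K, MeasurableSet (bad K) := fun K =>
    hW.measurableSet_biUnion fun f _ =>
      f.measurableSet_dom.diff (measurableSet_setOf_isWord_eq hΨfin K f.measurable_toFun)
  have hbad_anti : Antitone bad := fun K K' hK =>
    biUnion_mono subset_rfl fun f _ => sdiff_subset_sdiff_right
      fun x ⟨m, k, hm, hk, hx⟩ => ⟨m, k, hm, hk.trans hK, hx⟩
  have hbad_null : μ (⋂ K, bad K) = 0 := by
    rw [measure_eq_zero_iff_ae_notMem]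
    filter_upwards [hΨ.2] with x hx
    have hgood : ∀ᶠ K in atTop, ∀ f ∈ W, x ∈ f.dom → x ∈ good f K := by
      refine (eventually_all_finite hW).2 fun f hf => ?_
      by_cases hxf : x ∈ f.dom
      · obtain ⟨m, k, hm, hxm, hmx⟩ := hx _ (hWR f hf x hxf)
        filter_upwards [eventually_ge_atTop k] with K hK _ using ⟨m, k, hm, hK, hxm, hmx⟩
      · exact Eventually.of_forall fun _ h => absurd h hxf
    obtain ⟨K, hK⟩ := hgood.exists
    intro hx_bad
    obtain ⟨f, hf, hxf, hxg⟩ := mem_iUnion₂.1 (mem_iInter.1 hx_bad K)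
    exact hxg (hK f hf hxf)
  have htend := tendsto_measure_iInter_atTop (μ := μ)
    (fun K => (hbad_meas K).nullMeasurableSet) hbad_anti ⟨0, measure_ne_top μ _⟩
  rw [hbad_null] at htend
  obtain ⟨K, hK⟩ := (htend.eventually (gt_mem_nhds hε)).exists
  refine ⟨bad K, hbad_meas K, hK, K, fun f hf x hxf hxN => ?_⟩
  by_contra h
  exact hxN (mem_biUnion hf ⟨hxf, h⟩)

theorem Concentrated.of_isGraphing [MeasurableEq X] {μ : Measure X} [IsFiniteMeasure μ]
    {R : Set (X × X)} (hR : Equivalence fun x y => (x, y) ∈ R) {Φ Ψ : Set (PartialIso X)}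
    (hΦfin : Φ.Finite) (hΨfin : Ψ.Finite) (hΦ : ∀ φ ∈ Φ, φ.IsInnerOf R)
    (hΨ : IsGraphing Ψ μ R) (hc : Concentrated Φ μ) : Concentrated Ψ μ := by
  intro δ hδ
  obtain ⟨r, hr⟩ := hc (δ / 2) (ENNReal.half_pos hδ.ne')
  obtain ⟨N, hN, hμN, K, hK⟩ := exists_isWord_eq_of_notMem_of_measure_lt hΨfin hΨ
    (finite_setOf_isWord_le hΦfin r) (fun m ⟨_, _, hm⟩ => hm.isInnerOf hR hΦ)
    (ENNReal.half_pos hδ.ne')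
  refine ⟨K, fun A B hA hB hδA hδB => ?_⟩
  have hδ_top : δ ≠ ∞ := ne_top_of_le_ne_top (measure_ne_top μ A) hδA
  have hAN : δ / 2 ≤ μ (A \ N) := calc
    δ / 2 = δ - δ / 2 := (ENNReal.sub_half hδ_top).symm
    _ ≤ μ A - μ N := tsub_le_tsub hδA hμN.le
    _ ≤ μ (A \ N) := le_measure_sdiff
  refine (hr (A \ N) B (hA.diff hN) hB hAN (ENNReal.half_le_self.trans hδB)).trans_le
    (measure_mono ?_)
  rintro x ⟨⟨hxA, hxN⟩, m, k, hm, hk, hxm, hmxB⟩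
  obtain ⟨m', k', hm', hk', hxm', hm'x⟩ := hK m ⟨k, hk, hm⟩ x hxm hxN
  exact ⟨hxA, m', k', hm', hk', hxm', hm'x ▸ hmxB⟩

theorem stmt3_general {X : Type*} [MeasurableSpace X] [StandardBorelSpace X]
    (μ : Measure X) [IsProbabilityMeasure μ]
    (R : Set (X × X)) (hR : IsCountableBorelER R)
    (Φ Ψ : Set (PartialIso X)) (hΦfin : Φ.Finite) (hΨfin : Ψ.Finite)
    (hΦ : IsGraphing Φ μ R) (hΨ : IsGraphing Ψ μ R) :
    Concentrated Φ μ ↔ Concentrated Ψ μ :=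
  ⟨fun h => h.of_isGraphing hR.2.1 hΦfin hΨfin hΦ.1 hΨ,
    fun h => h.of_isGraphing hR.2.1 hΨfin hΦfin hΨ.1 hΦ⟩

/-- For an ergodic countable Borel equivalence relation with quasi-invariant
atomless probability measure, concentration does not depend on the chosen finite graphing. -/
theorem stmt3 {X : Type*} [MeasurableSpace X] [StandardBorelSpace X]
    (μ : Measure X) [IsProbabilityMeasure μ] [NullSingletonClass μ]
    (R : Set (X × X)) (hR : IsCountableBorelER R)
    (hqi : QuasiInvariant μ R) (herg : ErgodicRel μ R)
    (Φ Ψ : Set (PartialIso X)) (hΦfin : Φ.Finite) (hΨfin : Ψ.Finite)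
    (hΦ : IsGraphing Φ μ R) (hΨ : IsGraphing Ψ μ R) :
    Concentrated Φ μ ↔ Concentrated Ψ μ :=
  stmt3_general μ R hR Φ Ψ hΦfin hΨfin hΦ hΨ
end
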